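/- Let (H,α) be a monoidal Hom-Hopf algebra over a commutative ring k and let (N,ν) be simultaneously a right (H,α)-Hom-module (action n◁h) and a right (H,α)-Hom-comodule (coaction n↦n₍₀₎⊗n₍₁₎) satisfying the twisted Yetter-Drinfel'd condition n₍₀₎◁α⁻¹(h₁)⊗n₍₁₎α⁻¹(h₂)=(n◁h₂)₍₀₎⊗α⁻¹(h₁·(n◁h₂)₍₁₎). Then H⊗N with bijection α⊗ν, left action h·(g⊗n)=α⁻¹(h)g⊗ν(n), right action (g⊗n)·h=gh₁⊗(n◁h₂), left coaction ρ(g⊗n)=α(g₁)⊗(g₂⊗ν⁻¹(n)), and right coaction σ(g⊗n)=(g₁⊗n₍₀₎)⊗g₂n₍₁₎ is a bicovariant (H,α)-Hom-bimodule; in particular σ is Hom-coassociative and Hom-counital, ρ and σ Hom-commute, and σ((h·x)·α(g))=α(h₁)·(x_[0]·g₁)⊗α(h₂)(x_[1]g₂) for all x∈H⊗N. -/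

import Mathlib

open TensorProduct

noncomputable def tmul2 {k A B C D E F : Type*} [CommRing k]
    [AddCommGroup A] [AddCommGroup B] [AddCommGroup C] [AddCommGroup D]
    [AddCommGroup E] [AddCommGroup F]
    [Module k A] [Module k B] [Module k C] [Module k D] [Module k E] [Module k F]
    (f : A →ₗ[k] C →ₗ[k] E) (g : B →ₗ[k] D →ₗ[k] F) :
    (A ⊗[k] B) →ₗ[k] (C ⊗[k] D) →ₗ[k] (E ⊗[k] F) :=
  TensorProduct.curry
    ((TensorProduct.map (TensorProduct.lift f) (TensorProduct.lift g)) ∘ₗ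
      (TensorProduct.tensorTensorTensorComm k A B C D).toLinearMap)

/-- A monoidal Hom-Hopf algebra over a commutative ring `k`. -/
structure MonHomHopf (k H : Type*) [CommRing k] [AddCommGroup H] [Module k H] where
  α : H ≃ₗ[k] H
  mul : H →ₗ[k] H →ₗ[k] H
  one : H
  comul : H →ₗ[k] H ⊗[k] H
  counit : H →ₗ[k] k
  S : H →ₗ[k] H
  alpha_mul : ∀ g h, α (mul g h) = mul (α g) (α h)
  alpha_one : α one = one
  hom_assoc : ∀ g h l, mul (α g) (mul h l) = mul (mul g h) (α l)
  mul_one' : ∀ h, mul h one = α h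
  one_mul' : ∀ h, mul one h = α h
  comul_alpha : ∀ h, comul (α h)
    = TensorProduct.map α.toLinearMap α.toLinearMap (comul h)
  counit_alpha : ∀ h, counit (α h) = counit h
  hom_coassoc : ∀ h,
    (TensorProduct.assoc k H H H) ((TensorProduct.map comul α.symm.toLinearMap) (comul h))
      = (TensorProduct.map α.symm.toLinearMap comul) (comul h)
  counit_comul_left : ∀ h,
    (TensorProduct.lid k H) ((TensorProduct.map counit LinearMap.id) (comul h)) = α.symm h
  counit_comul_right : ∀ h,
    (TensorProduct.rid k H) ((TensorProduct.map LinearMap.id counit) (comul h)) = α.symm h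
  comul_mul : ∀ g h, comul (mul g h) = tmul2 mul mul (comul g) (comul h)
  comul_one : comul one = one ⊗ₜ[k] one
  counit_mul : ∀ g h, counit (mul g h) = counit g * counit h
  counit_one : counit one = 1
  antipode_left : ∀ h,
    (TensorProduct.lift mul) ((TensorProduct.map S LinearMap.id) (comul h)) = counit h • one
  antipode_right : ∀ h,
    (TensorProduct.lift mul) ((TensorProduct.map LinearMap.id S) (comul h)) = counit h • one
  S_alpha : ∀ h, S (α h) = α (S h)

/-- A bicovariant `(H,α)`-Hom-bimodule. -/
structure BicovBimod {k H : Type*} [CommRing k] [AddCommGroup H] [Module k H]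
    (A : MonHomHopf k H) (M : Type*) [AddCommGroup M] [Module k M] where
  μ : M ≃ₗ[k] M
  lact : H →ₗ[k] M →ₗ[k] M
  ract : M →ₗ[k] H →ₗ[k] M
  lact_assoc : ∀ g h m, lact (A.α g) (lact h m) = lact (A.mul g h) (μ m)
  lact_one : ∀ m, lact A.one m = μ m
  mu_lact : ∀ h m, μ (lact h m) = lact (A.α h) (μ m)
  ract_assoc : ∀ m g h, ract (μ m) (A.mul g h) = ract (ract m g) (A.α h)
  ract_one : ∀ m, ract m A.one = μ m
  mu_ract : ∀ m h, μ (ract m h) = ract (μ m) (A.α h)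
  bimod : ∀ h m g, ract (lact h m) (A.α g) = lact (A.α h) (ract m g)
  rho : M →ₗ[k] H ⊗[k] M
  rho_coassoc : ∀ m,
    (TensorProduct.map (LinearMap.id : H →ₗ[k] H) rho) (rho m)
      = (TensorProduct.assoc k H H M)
          ((TensorProduct.map
              ((TensorProduct.map A.α.toLinearMap (LinearMap.id : H →ₗ[k] H)) ∘ₗ A.comul)
              μ.symm.toLinearMap) (rho m))
  rho_counit : ∀ m,
    (TensorProduct.lid k M) ((TensorProduct.map A.counit (LinearMap.id : M →ₗ[k] M)) (rho m))
      = μ.symm m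
  rho_mu : ∀ m, rho (μ m) = TensorProduct.map A.α.toLinearMap μ.toLinearMap (rho m)
  rho_cov : ∀ h g m,
    rho (ract (lact h m) (A.α g))
      = tmul2 A.mul lact (A.comul (A.α h)) (tmul2 A.mul ract (rho m) (A.comul g))
  sigma : M →ₗ[k] M ⊗[k] H
  sigma_coassoc : ∀ m,
    (TensorProduct.map sigma A.α.symm.toLinearMap) (sigma m)
      = (TensorProduct.assoc k M H H).symm
          ((TensorProduct.map μ.symm.toLinearMap A.comul) (sigma m))
  sigma_counit : ∀ m,
    (TensorProduct.rid k M) ((TensorProduct.map (LinearMap.id : M →ₗ[k] M) A.counit) (sigma m))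
      = μ.symm m
  sigma_mu : ∀ m, sigma (μ m) = TensorProduct.map μ.toLinearMap A.α.toLinearMap (sigma m)
  sigma_cov : ∀ h g m,
    sigma (ract (lact h m) (A.α g))
      = tmul2 lact A.mul (A.comul (A.α h)) (tmul2 ract A.mul (sigma m) (A.comul g))
  homcomm : ∀ m,
    (TensorProduct.map (LinearMap.id : H →ₗ[k] H) sigma) (rho m)
      = (TensorProduct.assoc k H M H)
          ((TensorProduct.map
              ((TensorProduct.map A.α.toLinearMap (LinearMap.id : M →ₗ[k] M)) ∘ₗ rho)
              A.α.symm.toLinearMap) (sigma m))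

/-- A right-right Yetter-Drinfel'd Hom-module over `MonHomHopf`. -/
structure YDmod {k H : Type*} [CommRing k] [AddCommGroup H] [Module k H]
    (A : MonHomHopf k H) (N : Type*) [AddCommGroup N] [Module k N] where
  ν : N ≃ₗ[k] N
  act : N →ₗ[k] H →ₗ[k] N
  act_assoc : ∀ n g h, act (ν n) (A.mul g h) = act (act n g) (A.α h)
  act_one : ∀ n, act n A.one = ν n
  nu_act : ∀ n h, ν (act n h) = act (ν n) (A.α h)
  coact : N →ₗ[k] N ⊗[k] H
  coact_coassoc : ∀ n,
    (TensorProduct.map coact A.α.symm.toLinearMap) (coact n)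
      = (TensorProduct.assoc k N H H).symm
          ((TensorProduct.map ν.symm.toLinearMap A.comul) (coact n))
  coact_counit : ∀ n,
    (TensorProduct.rid k N) ((TensorProduct.map (LinearMap.id : N →ₗ[k] N) A.counit) (coact n))
      = ν.symm n
  coact_nu : ∀ n, coact (ν n) = TensorProduct.map ν.toLinearMap A.α.toLinearMap (coact n)
  yd : ∀ n h,
    tmul2 (act.compl₂ A.α.symm.toLinearMap) (A.mul.compl₂ A.α.symm.toLinearMap)
        (coact n) (A.comul h)
      = ((TensorProduct.map (LinearMap.id : N →ₗ[k] N)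
            (A.α.symm.toLinearMap ∘ₗ TensorProduct.lift A.mul)) ∘ₗ
          (TensorProduct.leftComm k H N H).toLinearMap)
          ((TensorProduct.map (LinearMap.id : H →ₗ[k] H) (coact ∘ₗ act n)) (A.comul h))

/-- Left action `h · (g ⊗ n) = α⁻¹(h) g ⊗ ν(n)` on `H ⊗ N`. -/
noncomputable def freeLact {k H N : Type*} [CommRing k] [AddCommGroup H] [Module k H]
    [AddCommGroup N] [Module k N] (A : MonHomHopf k H) (ν : N ≃ₗ[k] N) :
    H →ₗ[k] (H ⊗[k] N) →ₗ[k] (H ⊗[k] N) :=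
  TensorProduct.curry
    ((TensorProduct.map (TensorProduct.lift (A.mul.comp A.α.symm.toLinearMap)) ν.toLinearMap) ∘ₗ
      (TensorProduct.assoc k H H N).symm.toLinearMap)

/-- Right action `(g ⊗ n) · h = g h₁ ⊗ (n ◁ h₂)` on `H ⊗ N`. -/
noncomputable def freeRact {k H N : Type*} [CommRing k] [AddCommGroup H] [Module k H]
    [AddCommGroup N] [Module k N] (A : MonHomHopf k H) (act : N →ₗ[k] H →ₗ[k] N) :
    (H ⊗[k] N) →ₗ[k] H →ₗ[k] (H ⊗[k] N) :=
  (tmul2 A.mul act).compl₂ A.comul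

/-- Left coaction `ρ(g ⊗ n) = α(g₁) ⊗ (g₂ ⊗ ν⁻¹(n))` on `H ⊗ N`. -/
noncomputable def freeRho {k H N : Type*} [CommRing k] [AddCommGroup H] [Module k H]
    [AddCommGroup N] [Module k N] (A : MonHomHopf k H) (ν : N ≃ₗ[k] N) :
    (H ⊗[k] N) →ₗ[k] H ⊗[k] (H ⊗[k] N) :=
  (TensorProduct.assoc k H H N).toLinearMap ∘ₗ
    (TensorProduct.map
      ((TensorProduct.map A.α.toLinearMap (LinearMap.id : H →ₗ[k] H)) ∘ₗ A.comul)
      ν.symm.toLinearMap)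

/-- Right coaction `σ(g ⊗ n) = (g₁ ⊗ n₍₀₎) ⊗ g₂ n₍₁₎` on `H ⊗ N`. -/
noncomputable def freeSigma {k H N : Type*} [CommRing k] [AddCommGroup H] [Module k H]
    [AddCommGroup N] [Module k N] (A : MonHomHopf k H) (coact : N →ₗ[k] N ⊗[k] H) :
    (H ⊗[k] N) →ₗ[k] (H ⊗[k] N) ⊗[k] H :=
  (TensorProduct.map (LinearMap.id : H ⊗[k] N →ₗ[k] H ⊗[k] N) (TensorProduct.lift A.mul)) ∘ₗ
    (TensorProduct.tensorTensorTensorComm k H H N H).toLinearMap ∘ₗ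
    (TensorProduct.map A.comul coact)

/-!
Every structure map on `H ⊗ N` is a `tmul2` of bilinear maps against `Δ`, so most axioms reduce to
pointwise identities in `H` and `N`. By the bimodule law, covariance of `(h · x) · α(g)` splits
into covariance for the left and for the right action. Right covariance is where the
Yetter–Drinfel'd condition enters, and it is needed only on the generators `1 ⊗ n`: since
`a ⊗ n = a · (1 ⊗ ν⁻¹ n)` and `(a · y) · α(g) = α(a) · (y · g)`, left covariance carries it to all
of `H ⊗ N`.
-/

section Tmul2

variable {k : Type*} [CommRing k]
  {M₁ M₂ N₁ N₂ P₁ P₂ Q₁ Q₂ : Type*}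
  [AddCommGroup M₁] [AddCommGroup M₂] [AddCommGroup N₁] [AddCommGroup N₂]
  [AddCommGroup P₁] [AddCommGroup P₂] [AddCommGroup Q₁] [AddCommGroup Q₂]
  [Module k M₁] [Module k M₂] [Module k N₁] [Module k N₂]
  [Module k P₁] [Module k P₂] [Module k Q₁] [Module k Q₂]
  (f : M₁ →ₗ[k] N₁ →ₗ[k] P₁) (g : M₂ →ₗ[k] N₂ →ₗ[k] P₂)

@[simp] lemma tmul2_tmul (a : M₁) (b : M₂) (c : N₁) (d : N₂) :
    tmul2 f g (a ⊗ₜ b) (c ⊗ₜ d) = f a c ⊗ₜ g b d := by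
  simp [tmul2]

lemma tmul2_tmul_left (a : M₁) (b : M₂) :
    tmul2 f g (a ⊗ₜ b) = map (f a) (g b) := by
  ext; simp

lemma tmul2_map_left (φ₁ : Q₁ →ₗ[k] M₁) (φ₂ : Q₂ →ₗ[k] M₂) (x : Q₁ ⊗[k] Q₂) (y : N₁ ⊗[k] N₂) :
    tmul2 f g (map φ₁ φ₂ x) y = tmul2 (f ∘ₗ φ₁) (g ∘ₗ φ₂) x y := by
  induction x using TensorProduct.induction_on <;>
    induction y using TensorProduct.induction_on <;> simp_all

lemma tmul2_map_right (ψ₁ : Q₁ →ₗ[k] N₁) (ψ₂ : Q₂ →ₗ[k] N₂) (x : M₁ ⊗[k] M₂) (y : Q₁ ⊗[k] Q₂) :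
    tmul2 f g x (map ψ₁ ψ₂ y) = tmul2 (f.compl₂ ψ₁) (g.compl₂ ψ₂) x y := by
  induction x using TensorProduct.induction_on <;>
    induction y using TensorProduct.induction_on <;> simp_all

lemma map_tmul2 (χ₁ : P₁ →ₗ[k] Q₁) (χ₂ : P₂ →ₗ[k] Q₂) (x : M₁ ⊗[k] M₂) (y : N₁ ⊗[k] N₂) :
    map χ₁ χ₂ (tmul2 f g x y) = tmul2 (f.compr₂ χ₁) (g.compr₂ χ₂) x y := by
  induction x using TensorProduct.induction_on <;>
    induction y using TensorProduct.induction_on <;> simp_all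

lemma tmul2_assoc {A₁ A₂ B₁ B₂ C₁ C₂ D₁ D₂ E₁ E₂ F₁ F₂ : Type*}
    [AddCommGroup A₁] [AddCommGroup A₂] [AddCommGroup B₁] [AddCommGroup B₂]
    [AddCommGroup C₁] [AddCommGroup C₂] [AddCommGroup D₁] [AddCommGroup D₂]
    [AddCommGroup E₁] [AddCommGroup E₂] [AddCommGroup F₁] [AddCommGroup F₂]
    [Module k A₁] [Module k A₂] [Module k B₁] [Module k B₂]
    [Module k C₁] [Module k C₂] [Module k D₁] [Module k D₂]
    [Module k E₁] [Module k E₂] [Module k F₁] [Module k F₂]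
    {g₁ : A₁ →ₗ[k] B₁ →ₗ[k] D₁} {g₂ : A₂ →ₗ[k] B₂ →ₗ[k] D₂}
    {f₁ : D₁ →ₗ[k] C₁ →ₗ[k] E₁} {f₂ : D₂ →ₗ[k] C₂ →ₗ[k] E₂}
    {f₁' : B₁ →ₗ[k] C₁ →ₗ[k] F₁} {f₂' : B₂ →ₗ[k] C₂ →ₗ[k] F₂}
    {g₁' : A₁ →ₗ[k] F₁ →ₗ[k] E₁} {g₂' : A₂ →ₗ[k] F₂ →ₗ[k] E₂}
    (h₁ : ∀ a b c, f₁ (g₁ a b) c = g₁' a (f₁' b c))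
    (h₂ : ∀ a b c, f₂ (g₂ a b) c = g₂' a (f₂' b c))
    (x : A₁ ⊗[k] A₂) (y : B₁ ⊗[k] B₂) (z : C₁ ⊗[k] C₂) :
    tmul2 f₁ f₂ (tmul2 g₁ g₂ x y) z = tmul2 g₁' g₂' x (tmul2 f₁' f₂' y z) := by
  induction x using TensorProduct.induction_on <;>
    induction y using TensorProduct.induction_on <;>
    induction z using TensorProduct.induction_on <;> simp_all

lemma tmul2_assoc_symm {A₁ A₂ B₁ B₂ C₁ C₂ : Type*}
    [AddCommGroup A₁] [AddCommGroup A₂] [AddCommGroup B₁] [AddCommGroup B₂]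
    [AddCommGroup C₁] [AddCommGroup C₂]
    [Module k A₁] [Module k A₂] [Module k B₁] [Module k B₂]
    [Module k C₁] [Module k C₂]
    (f : A₁ →ₗ[k] A₂ →ₗ[k] P₁) (g : B₁ →ₗ[k] B₂ →ₗ[k] P₂) (h : C₁ →ₗ[k] C₂ →ₗ[k] Q₁)
    (x : A₁ ⊗[k] (B₁ ⊗[k] C₁)) (y : A₂ ⊗[k] (B₂ ⊗[k] C₂)) :
    tmul2 (tmul2 f g) h ((TensorProduct.assoc k A₁ B₁ C₁).symm x)
        ((TensorProduct.assoc k A₂ B₂ C₂).symm y)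
      = (TensorProduct.assoc k P₁ P₂ Q₁).symm (tmul2 f (tmul2 g h) x y) := by
  have hcomp : (tmul2 (tmul2 f g) h).compl₁₂ (TensorProduct.assoc k A₁ B₁ C₁).symm.toLinearMap
        (TensorProduct.assoc k A₂ B₂ C₂).symm.toLinearMap
      = (tmul2 f (tmul2 g h)).compr₂ (TensorProduct.assoc k P₁ P₂ Q₁).symm.toLinearMap := by
    ext; simp
  exact LinearMap.congr_fun₂ hcomp x y

end Tmul2

lemma TensorProduct.assoc_tmul_eq_map {k M N P : Type*} [CommRing k] [AddCommGroup M]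
    [AddCommGroup N] [AddCommGroup P] [Module k M] [Module k N] [Module k P]
    (x : M ⊗[k] N) (p : P) :
    TensorProduct.assoc k M N P (x ⊗ₜ p) = map LinearMap.id ((mk k N P).flip p) x := by
  induction x using TensorProduct.induction_on <;> simp_all [add_tmul]

lemma TensorProduct.congr_apply_eq_map {k M N P Q : Type*} [CommRing k] [AddCommGroup M]
    [AddCommGroup N] [AddCommGroup P] [AddCommGroup Q] [Module k M] [Module k N] [Module k P]
    [Module k Q] (f : M ≃ₗ[k] P) (g : N ≃ₗ[k] Q) (x : M ⊗[k] N) :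
    TensorProduct.congr f g x = map f.toLinearMap g.toLinearMap x := rfl

namespace MonHomHopf

variable {k H : Type*} [CommRing k] [AddCommGroup H] [Module k H] (A : MonHomHopf k H)

lemma alpha_symm_one : A.α.symm A.one = A.one := by
  rw [LinearEquiv.symm_apply_eq, A.alpha_one]

lemma alpha_symm_mul (g h : H) :
    A.α.symm (A.mul g h) = A.mul (A.α.symm g) (A.α.symm h) := by
  rw [LinearEquiv.symm_apply_eq, A.alpha_mul, A.α.apply_symm_apply, A.α.apply_symm_apply]

lemma hom_assoc' (g h l : H) : A.mul g (A.mul h l) = A.mul (A.mul (A.α.symm g) h) (A.α l) := by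
  rw [← A.hom_assoc, A.α.apply_symm_apply]

lemma comul_alpha_symm (h : H) :
    A.comul (A.α.symm h)
      = map A.α.symm.toLinearMap A.α.symm.toLinearMap (A.comul h) := by
  conv_rhs => rw [← A.α.apply_symm_apply h, A.comul_alpha, map_map]
  simp

lemma mul_one_eq_alpha : A.mul A.one = A.α.toLinearMap := LinearMap.ext A.one_mul'

section Interchange

variable {M : Type*} [AddCommGroup M] [Module k M]
  {lact : H →ₗ[k] M →ₗ[k] M} {ract : M →ₗ[k] H →ₗ[k] M}

lemma tmul2_mul_ract_tmul2_mul_lact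
    (bimod : ∀ h m g, ract (lact h m) (A.α g) = lact (A.α h) (ract m g))
    (h g : H) (z : H ⊗[k] M) :
    tmul2 A.mul ract (tmul2 A.mul lact (A.comul h) z) (A.comul (A.α g))
      = tmul2 A.mul lact (A.comul (A.α h)) (tmul2 A.mul ract z (A.comul g)) := by
  rw [A.comul_alpha, A.comul_alpha, tmul2_map_right, tmul2_map_left]
  exact tmul2_assoc (fun _ _ _ => (A.hom_assoc _ _ _).symm) bimod _ _ _

lemma tmul2_ract_mul_tmul2_lact_mul
    (bimod : ∀ h m g, ract (lact h m) (A.α g) = lact (A.α h) (ract m g))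
    (h g : H) (z : M ⊗[k] H) :
    tmul2 ract A.mul (tmul2 lact A.mul (A.comul h) z) (A.comul (A.α g))
      = tmul2 lact A.mul (A.comul (A.α h)) (tmul2 ract A.mul z (A.comul g)) := by
  rw [A.comul_alpha, A.comul_alpha, tmul2_map_right, tmul2_map_left]
  exact tmul2_assoc bimod (fun _ _ _ => (A.hom_assoc _ _ _).symm) _ _ _

end Interchange

end MonHomHopf

namespace YDmod

variable {k H N : Type*} [CommRing k] [AddCommGroup H] [Module k H]
  [AddCommGroup N] [Module k N] {A : MonHomHopf k H} (Y : YDmod A N)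

lemma nu_symm_act (n : N) (h : H) :
    Y.ν.symm (Y.act n h) = Y.act (Y.ν.symm n) (A.α.symm h) := by
  rw [LinearEquiv.symm_apply_eq, Y.nu_act, Y.ν.apply_symm_apply, A.α.apply_symm_apply]

lemma coact_nu_symm (n : N) :
    Y.coact (Y.ν.symm n)
      = map Y.ν.symm.toLinearMap A.α.symm.toLinearMap (Y.coact n) := by
  conv_rhs => rw [← Y.ν.apply_symm_apply n, Y.coact_nu, map_map]
  simp

/-- `v ⊗ w ↦ n₍₀₎ ◁ v ⊗ α(n₍₁₎ w)` -/
noncomputable def ydLeft (n : N) : H ⊗[k] H →ₗ[k] N ⊗[k] H :=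
  map LinearMap.id A.α.toLinearMap ∘ₗ tmul2 Y.act A.mul (Y.coact n)

/-- `v ⊗ w ↦ (n ◁ α(w))₍₀₎ ⊗ α(v) (n ◁ α(w))₍₁₎` -/
noncomputable def ydRight (n : N) : H ⊗[k] H →ₗ[k] N ⊗[k] H :=
  map LinearMap.id (lift A.mul) ∘ₗ (TensorProduct.leftComm k H N H).toLinearMap ∘ₗ
    map A.α.toLinearMap (Y.coact ∘ₗ Y.act n ∘ₗ A.α.toLinearMap)

lemma ydLeft_comp_comul (n : N) : Y.ydLeft n ∘ₗ A.comul = Y.ydRight n ∘ₗ A.comul := by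
  ext c
  have yd := congrArg (map LinearMap.id A.α.toLinearMap) (Y.yd n (A.α c))
  have hact : (Y.act.compl₂ A.α.symm.toLinearMap).compl₂ A.α.toLinearMap = Y.act := by
    ext; simp
  have hmul : (A.mul.compl₂ A.α.symm.toLinearMap).compl₂ A.α.toLinearMap = A.mul := by
    ext; simp
  rw [A.comul_alpha, tmul2_map_right, hact, hmul] at yd
  simp only [LinearMap.comp_apply, map_map] at yd
  simp only [ydLeft, ydRight, LinearMap.comp_apply, yd]
  congr 2
  ext
  simp

end YDmod

section FreeBimodule

variable {k H N : Type*} [CommRing k] [AddCommGroup H] [Module k H]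
  [AddCommGroup N] [Module k N] (A : MonHomHopf k H) (Y : YDmod A N)

lemma freeLact_apply (h : H) (x : H ⊗[k] N) :
    freeLact A Y.ν h x = map (A.mul (A.α.symm h)) Y.ν.toLinearMap x := by
  induction x using TensorProduct.induction_on <;> simp_all [freeLact, tmul_add]

lemma freeRact_apply (x : H ⊗[k] N) (h : H) :
    freeRact A Y.act x h = tmul2 A.mul Y.act x (A.comul h) := rfl

lemma freeRho_tmul (g : H) (n : N) :
    freeRho A Y.ν (g ⊗ₜ n) = map A.α.toLinearMap ((mk k H N).flip (Y.ν.symm n)) (A.comul g) := by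
  simp only [freeRho, LinearMap.comp_apply, map_tmul, LinearEquiv.coe_coe]
  induction A.comul g using TensorProduct.induction_on <;> simp_all [add_tmul]

lemma freeSigma_tmul (g : H) (n : N) :
    freeSigma A Y.coact (g ⊗ₜ n) = tmul2 (mk k H N) A.mul (A.comul g) (Y.coact n) := by
  simp only [freeSigma, LinearMap.comp_apply, map_tmul, LinearEquiv.coe_coe]
  induction A.comul g using TensorProduct.induction_on with
  | zero => simp
  | add => simp_all [add_tmul]
  | tmul =>
    induction Y.coact n using TensorProduct.induction_on <;> simp_all [tmul_add]

lemma freeLact_assoc (g h : H) (x : H ⊗[k] N) :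
    freeLact A Y.ν (A.α g) (freeLact A Y.ν h x)
      = freeLact A Y.ν (A.mul g h) (TensorProduct.congr A.α Y.ν x) := by
  simp only [freeLact_apply, TensorProduct.congr_apply_eq_map, map_map]
  congr 2
  ext c
  simp [A.alpha_symm_mul, A.hom_assoc']

lemma freeLact_one (x : H ⊗[k] N) :
    freeLact A Y.ν A.one x = TensorProduct.congr A.α Y.ν x := by
  rw [freeLact_apply, TensorProduct.congr_apply_eq_map]
  congr 2
  ext c
  simp [A.alpha_symm_one, A.one_mul']

lemma congr_freeLact (h : H) (x : H ⊗[k] N) :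
    TensorProduct.congr A.α Y.ν (freeLact A Y.ν h x)
      = freeLact A Y.ν (A.α h) (TensorProduct.congr A.α Y.ν x) := by
  simp only [freeLact_apply, TensorProduct.congr_apply_eq_map, map_map]
  congr 2
  ext c
  simp [A.alpha_mul]

lemma freeRact_assoc (x : H ⊗[k] N) (g h : H) :
    freeRact A Y.act (TensorProduct.congr A.α Y.ν x) (A.mul g h)
      = freeRact A Y.act (freeRact A Y.act x g) (A.α h) := by
  simp only [freeRact_apply, TensorProduct.congr_apply_eq_map, A.comul_mul, A.comul_alpha,
    tmul2_map_left, tmul2_map_right]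
  exact (tmul2_assoc (fun _ _ _ => A.hom_assoc _ _ _ |>.symm)
    (fun _ _ _ => Y.act_assoc _ _ _ |>.symm) _ _ _).symm

lemma freeRact_one (x : H ⊗[k] N) :
    freeRact A Y.act x A.one = TensorProduct.congr A.α Y.ν x := by
  induction x using TensorProduct.induction_on <;>
    simp_all [freeRact_apply, A.comul_one, A.mul_one', Y.act_one]

lemma congr_freeRact (x : H ⊗[k] N) (h : H) :
    TensorProduct.congr A.α Y.ν (freeRact A Y.act x h)
      = freeRact A Y.act (TensorProduct.congr A.α Y.ν x) (A.α h) := by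
  simp only [freeRact_apply, TensorProduct.congr_apply_eq_map, A.comul_alpha, map_tmul2,
    tmul2_map_left, tmul2_map_right]
  congr 3 <;> ext <;> simp [A.alpha_mul, Y.nu_act]

lemma freeRact_freeLact (h : H) (x : H ⊗[k] N) (g : H) :
    freeRact A Y.act (freeLact A Y.ν h x) (A.α g)
      = freeLact A Y.ν (A.α h) (freeRact A Y.act x g) := by
  simp only [freeRact_apply, freeLact_apply, A.comul_alpha, map_tmul2, tmul2_map_left,
    tmul2_map_right]
  congr 3 <;> ext <;> simp [A.hom_assoc', Y.nu_act]

lemma freeLact_one_tmul (a : H) (n : N) :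
    freeLact A Y.ν a (A.one ⊗ₜ Y.ν.symm n) = a ⊗ₜ n := by
  simp [freeLact_apply, A.mul_one']

end FreeBimodule

section FreeLeftCoaction

variable {k H N : Type*} [CommRing k] [AddCommGroup H] [Module k H]
  [AddCommGroup N] [Module k N] (A : MonHomHopf k H) (Y : YDmod A N)

lemma freeRho_congr (x : H ⊗[k] N) :
    freeRho A Y.ν (TensorProduct.congr A.α Y.ν x)
      = map A.α.toLinearMap (TensorProduct.congr A.α Y.ν).toLinearMap (freeRho A Y.ν x) := by
  induction x using TensorProduct.induction_on with
  | zero => simp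
  | add x y hx hy => simp [hx, hy]
  | tmul a n =>
    rw [congr_tmul, freeRho_tmul, freeRho_tmul, A.comul_alpha, map_map, map_map]
    congr 2
    ext
    simp

lemma freeRho_counit (x : H ⊗[k] N) :
    TensorProduct.lid k (H ⊗[k] N) (map A.counit LinearMap.id (freeRho A Y.ν x))
      = (TensorProduct.congr A.α Y.ν).symm x := by
  induction x using TensorProduct.induction_on with
  | zero => simp
  | add x y hx hy => simp [hx, hy]
  | tmul a n =>
    have hcounit : ∀ w : H ⊗[k] H,
        TensorProduct.lid k (H ⊗[k] N)
            (map A.counit LinearMap.id (map A.α.toLinearMap ((mk k H N).flip (Y.ν.symm n)) w))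
          = TensorProduct.lid k H (map A.counit LinearMap.id w) ⊗ₜ Y.ν.symm n := by
      intro w
      induction w using TensorProduct.induction_on <;>
        simp_all [A.counit_alpha, smul_tmul', add_tmul]
    rw [freeRho_tmul, hcounit, A.counit_comul_left, congr_symm_tmul]

lemma freeRho_coassoc (x : H ⊗[k] N) :
    map LinearMap.id (freeRho A Y.ν) (freeRho A Y.ν x)
      = TensorProduct.assoc k H H (H ⊗[k] N)
          (map (map A.α.toLinearMap LinearMap.id ∘ₗ A.comul)
            (TensorProduct.congr A.α Y.ν).symm.toLinearMap (freeRho A Y.ν x)) := by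
  induction x using TensorProduct.induction_on with
  | zero => simp
  | add x y hx hy => simp [hx, hy]
  | tmul a n =>
    let Ψ := map (A.α.toLinearMap ∘ₗ A.α.toLinearMap)
      (map A.α.toLinearMap ((mk k H N).flip (Y.ν.symm (Y.ν.symm n))))
    calc map LinearMap.id (freeRho A Y.ν) (freeRho A Y.ν (a ⊗ₜ n))
        = Ψ (map A.α.symm.toLinearMap A.comul (A.comul a)) := by
          rw [freeRho_tmul, map_map, map_map]
          congr 2 <;> ext <;> simp [freeRho_tmul]
      _ = Ψ (TensorProduct.assoc k H H H (map A.comul A.α.symm.toLinearMap (A.comul a))) := by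
          rw [A.hom_coassoc]
      _ = _ := by
          rw [map_map_assoc, map_map, freeRho_tmul, map_map]
          congr 2
          ext
          simp [A.comul_alpha, map_map]

lemma freeRho_freeLact (h : H) (x : H ⊗[k] N) :
    freeRho A Y.ν (freeLact A Y.ν h x)
      = tmul2 A.mul (freeLact A Y.ν) (A.comul h) (freeRho A Y.ν x) := by
  induction x using TensorProduct.induction_on with
  | zero => simp
  | add x y hx hy => simp [hx, hy]
  | tmul a n =>
    rw [freeLact_apply, map_tmul, LinearEquiv.coe_coe, freeRho_tmul, freeRho_tmul, A.comul_mul,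
      A.comul_alpha_symm, map_tmul2, tmul2_map_left, tmul2_map_right]
    congr 3 <;> ext <;> simp [freeLact_apply, A.alpha_mul]

lemma freeRho_freeRact_one_tmul (m : N) (g : H) :
    freeRho A Y.ν (freeRact A Y.act (A.one ⊗ₜ m) g)
      = tmul2 A.mul (freeRact A Y.act) (freeRho A Y.ν (A.one ⊗ₜ m)) (A.comul g) := by
  let Ψ := map (A.α.toLinearMap ∘ₗ A.α.toLinearMap)
    (map A.α.toLinearMap (Y.act (Y.ν.symm m)))
  calc freeRho A Y.ν (freeRact A Y.act (A.one ⊗ₜ m) g)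
      = Ψ (TensorProduct.assoc k H H H (map A.comul A.α.symm.toLinearMap (A.comul g))) := by
        rw [freeRact_apply, tmul2_tmul_left, A.mul_one_eq_alpha]
        induction A.comul g using TensorProduct.induction_on with
        | zero => simp
        | add x y hx hy => simp [hx, hy]
        | tmul g₁ g₂ =>
          rw [map_tmul, map_tmul, LinearEquiv.coe_coe, freeRho_tmul, A.comul_alpha, map_map,
            assoc_tmul_eq_map, map_map]
          congr 2
          ext
          simp [Y.nu_symm_act]
    _ = Ψ (map A.α.symm.toLinearMap A.comul (A.comul g)) := by rw [A.hom_coassoc]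
    _ = tmul2 A.mul (freeRact A Y.act) (freeRho A Y.ν (A.one ⊗ₜ m)) (A.comul g) := by
        rw [freeRho_tmul, A.comul_one, map_tmul, tmul2_tmul_left, map_map]
        congr 2 <;> ext <;> simp [freeRact_apply, tmul2_tmul_left, A.mul_one_eq_alpha, A.alpha_one]

lemma freeRho_freeRact (x : H ⊗[k] N) (g : H) :
    freeRho A Y.ν (freeRact A Y.act x g)
      = tmul2 A.mul (freeRact A Y.act) (freeRho A Y.ν x) (A.comul g) := by
  induction x using TensorProduct.induction_on with
  | zero => simp
  | add x y hx hy => simp_all [freeRact_apply]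
  | tmul a n =>
    rw [← freeLact_one_tmul A Y a n, ← A.α.apply_symm_apply g, freeRact_freeLact,
      freeRho_freeLact, freeRho_freeRact_one_tmul, freeRho_freeLact,
      A.tmul2_mul_ract_tmul2_mul_lact (freeRact_freeLact A Y)]

lemma freeRho_cov (h g : H) (x : H ⊗[k] N) :
    freeRho A Y.ν (freeRact A Y.act (freeLact A Y.ν h x) (A.α g))
      = tmul2 A.mul (freeLact A Y.ν) (A.comul (A.α h))
          (tmul2 A.mul (freeRact A Y.act) (freeRho A Y.ν x) (A.comul g)) := by
  rw [freeRho_freeRact, freeRho_freeLact, A.tmul2_mul_ract_tmul2_mul_lact (freeRact_freeLact A Y)]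

end FreeLeftCoaction

section FreeRightCoaction

variable {k H N : Type*} [CommRing k] [AddCommGroup H] [Module k H]
  [AddCommGroup N] [Module k N] (A : MonHomHopf k H) (Y : YDmod A N)

lemma freeSigma_congr (x : H ⊗[k] N) :
    freeSigma A Y.coact (TensorProduct.congr A.α Y.ν x)
      = map (TensorProduct.congr A.α Y.ν).toLinearMap A.α.toLinearMap (freeSigma A Y.coact x) := by
  induction x using TensorProduct.induction_on with
  | zero => simp
  | add x y hx hy => simp [hx, hy]
  | tmul a n =>
    rw [congr_tmul, freeSigma_tmul, freeSigma_tmul, A.comul_alpha, Y.coact_nu, map_tmul2,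
      tmul2_map_left, tmul2_map_right]
    congr 3
    ext
    simp [A.alpha_mul]

lemma freeSigma_counit (x : H ⊗[k] N) :
    TensorProduct.rid k (H ⊗[k] N) (map LinearMap.id A.counit (freeSigma A Y.coact x))
      = (TensorProduct.congr A.α Y.ν).symm x := by
  induction x using TensorProduct.induction_on with
  | zero => simp
  | add x y hx hy => simp [hx, hy]
  | tmul a n =>
    have hcounit : ∀ (w : H ⊗[k] H) (v : N ⊗[k] H),
        TensorProduct.rid k (H ⊗[k] N) (map LinearMap.id A.counit (tmul2 (mk k H N) A.mul w v))
          = TensorProduct.rid k H (map LinearMap.id A.counit w)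
              ⊗ₜ TensorProduct.rid k N (map LinearMap.id A.counit v) := by
      intro w v
      induction w using TensorProduct.induction_on with
      | zero => simp
      | add => simp_all [add_tmul]
      | tmul =>
        induction v using TensorProduct.induction_on <;>
          simp_all [A.counit_mul, smul_tmul', smul_smul, tmul_add, mul_comm]
    rw [freeSigma_tmul, hcounit, A.counit_comul_right, Y.coact_counit, congr_symm_tmul]

lemma freeSigma_coassoc (x : H ⊗[k] N) :
    map (freeSigma A Y.coact) A.α.symm.toLinearMap (freeSigma A Y.coact x)
      = (TensorProduct.assoc k (H ⊗[k] N) H H).symm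
          (map (TensorProduct.congr A.α Y.ν).symm.toLinearMap A.comul (freeSigma A Y.coact x)) := by
  induction x using TensorProduct.induction_on with
  | zero => simp
  | add x y hx hy => simp [hx, hy]
  | tmul a n =>
    have hσ : (mk k H N).compr₂ (freeSigma A Y.coact)
        = (tmul2 (mk k H N) A.mul ∘ₗ A.comul).compl₂ Y.coact := by
      ext; simp [freeSigma_tmul]
    have hα : A.mul.compr₂ A.α.symm.toLinearMap
        = (A.mul ∘ₗ A.α.symm.toLinearMap).compl₂ A.α.symm.toLinearMap := by
      ext; simp [A.alpha_symm_mul]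
    have hΔ : map A.comul A.α.symm.toLinearMap (A.comul a)
        = (TensorProduct.assoc k H H H).symm (map A.α.symm.toLinearMap A.comul (A.comul a)) := by
      rw [LinearEquiv.eq_symm_apply, A.hom_coassoc]
    rw [freeSigma_tmul, map_tmul2, map_tmul2, hσ, hα, ← tmul2_map_right, ← tmul2_map_left, hΔ,
      Y.coact_coassoc, tmul2_assoc_symm, tmul2_map_left, tmul2_map_right]
    congr 4
    ext
    simp [A.comul_mul]

lemma freeSigma_freeLact (h : H) (x : H ⊗[k] N) :
    freeSigma A Y.coact (freeLact A Y.ν h x)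
      = tmul2 (freeLact A Y.ν) A.mul (A.comul h) (freeSigma A Y.coact x) := by
  induction x using TensorProduct.induction_on with
  | zero => simp
  | add x y hx hy => simp [hx, hy]
  | tmul a n =>
    rw [freeLact_apply, map_tmul, LinearEquiv.coe_coe, freeSigma_tmul, freeSigma_tmul, A.comul_mul,
      A.comul_alpha_symm, Y.coact_nu, tmul2_map_right, tmul2_map_left]
    exact tmul2_assoc (by simp [freeLact_apply]) (fun _ _ _ => (A.hom_assoc' _ _ _).symm) _ _ _

lemma freeSigma_freeRact_one_tmul (m : N) (g : H) :
    freeSigma A Y.coact (freeRact A Y.act (A.one ⊗ₜ m) g)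
      = tmul2 (freeRact A Y.act) A.mul (freeSigma A Y.coact (A.one ⊗ₜ m)) (A.comul g) := by
  -- Both ends are `Σ (α g₁₁ ⊗ Y (g₁₂ ⊗ α⁻¹ g₂))` for the two sides `Y` of the YD condition;
  -- coassociativity turns this into `Σ (g₁ ⊗ Y (Δ g₂))`.
  calc freeSigma A Y.coact (freeRact A Y.act (A.one ⊗ₜ m) g)
      = (TensorProduct.assoc k H N H).symm (map A.α.toLinearMap (Y.ydRight m)
          (TensorProduct.assoc k H H H (map A.comul A.α.symm.toLinearMap (A.comul g)))) := by
        rw [freeRact_apply, tmul2_tmul_left, A.mul_one_eq_alpha]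
        induction A.comul g using TensorProduct.induction_on with
        | zero => simp
        | add x y hx hy => simp [hx, hy]
        | tmul b c =>
          rw [map_tmul, map_tmul, LinearEquiv.coe_coe, freeSigma_tmul, A.comul_alpha]
          induction A.comul b using TensorProduct.induction_on with
          | zero => simp
          | add x y hx hy => simp_all [add_tmul]
          | tmul u v =>
            simp only [map_tmul, tmul2_tmul_left, assoc_tmul, YDmod.ydRight, LinearMap.comp_apply,
              LinearEquiv.coe_coe, A.α.apply_symm_apply]
            induction Y.coact (Y.act m c) using TensorProduct.induction_on <;>
              simp_all [tmul_add]
    _ = (TensorProduct.assoc k H N H).symm (map A.α.toLinearMap (Y.ydLeft m)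
          (TensorProduct.assoc k H H H (map A.comul A.α.symm.toLinearMap (A.comul g)))) := by
        rw [A.hom_coassoc, map_map, map_map, Y.ydLeft_comp_comul]
    _ = tmul2 (freeRact A Y.act) A.mul (freeSigma A Y.coact (A.one ⊗ₜ m)) (A.comul g) := by
        rw [freeSigma_tmul, A.comul_one, tmul2_tmul_left, tmul2_map_left, YDmod.ydLeft]
        induction Y.coact m using TensorProduct.induction_on with
        | zero => simp
        | add x y hx hy => simp_all [LinearMap.comp_add, map_add_right]
        | tmul n₀ n₁ =>
          rw [tmul2_tmul_left, tmul2_tmul_left, ← map_comp, map_map_assoc,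
            LinearEquiv.symm_apply_apply, map_map]
          congr 2 <;> ext <;>
            simp [freeRact_apply, tmul2_tmul_left, A.mul_one_eq_alpha, A.alpha_mul]

lemma freeSigma_freeRact (x : H ⊗[k] N) (g : H) :
    freeSigma A Y.coact (freeRact A Y.act x g)
      = tmul2 (freeRact A Y.act) A.mul (freeSigma A Y.coact x) (A.comul g) := by
  induction x using TensorProduct.induction_on with
  | zero => simp
  | add x y hx hy => simp_all [freeRact_apply]
  | tmul a n =>
    rw [← freeLact_one_tmul A Y a n, ← A.α.apply_symm_apply g, freeRact_freeLact,
      freeSigma_freeLact, freeSigma_freeRact_one_tmul, freeSigma_freeLact,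
      A.tmul2_ract_mul_tmul2_lact_mul (freeRact_freeLact A Y)]

lemma freeSigma_cov (h g : H) (x : H ⊗[k] N) :
    freeSigma A Y.coact (freeRact A Y.act (freeLact A Y.ν h x) (A.α g))
      = tmul2 (freeLact A Y.ν) A.mul (A.comul (A.α h))
          (tmul2 (freeRact A Y.act) A.mul (freeSigma A Y.coact x) (A.comul g)) := by
  rw [freeSigma_freeRact, freeSigma_freeLact,
    A.tmul2_ract_mul_tmul2_lact_mul (freeRact_freeLact A Y)]

lemma freeRho_freeSigma_comm (x : H ⊗[k] N) :
    map LinearMap.id (freeSigma A Y.coact) (freeRho A Y.ν x)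
      = TensorProduct.assoc k H (H ⊗[k] N) H
          (map (map A.α.toLinearMap LinearMap.id ∘ₗ freeRho A Y.ν) A.α.symm.toLinearMap
            (freeSigma A Y.coact x)) := by
  induction x using TensorProduct.induction_on with
  | zero => simp
  | add x y hx hy => simp [hx, hy]
  | tmul a n =>
    calc map LinearMap.id (freeSigma A Y.coact) (freeRho A Y.ν (a ⊗ₜ n))
        = map (A.α.toLinearMap ∘ₗ A.α.toLinearMap) ((tmul2 (mk k H N) A.mul).flip
            (map Y.ν.symm.toLinearMap A.α.symm.toLinearMap (Y.coact n)))
            (map A.α.symm.toLinearMap A.comul (A.comul a)) := by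
          rw [freeRho_tmul, map_map, map_map]
          congr 2 <;> ext <;> simp [freeSigma_tmul, Y.coact_nu_symm]
      _ = map (A.α.toLinearMap ∘ₗ A.α.toLinearMap) ((tmul2 (mk k H N) A.mul).flip
            (map Y.ν.symm.toLinearMap A.α.symm.toLinearMap (Y.coact n)))
            (TensorProduct.assoc k H H H (map A.comul A.α.symm.toLinearMap (A.comul a))) := by
          rw [A.hom_coassoc]
      _ = _ := by
          rw [freeSigma_tmul]
          induction A.comul a using TensorProduct.induction_on with
          | zero => simp
          | add x y hx hy => simp_all
          | tmul a₁ a₂ =>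
            rw [map_tmul, tmul2_tmul_left, map_map]
            induction Y.coact n using TensorProduct.induction_on with
            | zero => simp
            | add x y hx hy => simp_all [map_add_right]
            | tmul n₀ n₁ =>
              rw [map_tmul, map_tmul, LinearMap.comp_apply, LinearMap.comp_apply, mk_apply,
                freeRho_tmul, assoc_tmul_eq_map, assoc_tmul_eq_map, map_map, map_map, map_map]
              congr 2
              ext
              simp [A.alpha_symm_mul]

end FreeRightCoaction

/-- for a Yetter-Drinfel'd Hom-module `(N,ν)`, the canonical maps turn
`H ⊗ N` into a bicovariant `(H,α)`-Hom-bimodule. -/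
theorem free_bicovariant_bimodule {k H : Type*} [CommRing k] [AddCommGroup H] [Module k H]
    (A : MonHomHopf k H) {N : Type*} [AddCommGroup N] [Module k N]
    (Y : YDmod A N) :
    ∃ B : BicovBimod A (H ⊗[k] N),
      B.μ = TensorProduct.congr A.α Y.ν ∧
      B.lact = freeLact A Y.ν ∧
      B.ract = freeRact A Y.act ∧
      B.rho = freeRho A Y.ν ∧
      B.sigma = freeSigma A Y.coact :=
  ⟨{ μ := TensorProduct.congr A.α Y.ν
     lact := freeLact A Y.ν
     ract := freeRact A Y.act
     rho := freeRho A Y.ν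
     sigma := freeSigma A Y.coact
     lact_assoc := freeLact_assoc A Y
     lact_one := freeLact_one A Y
     mu_lact := congr_freeLact A Y
     ract_assoc := freeRact_assoc A Y
     ract_one := freeRact_one A Y
     mu_ract := congr_freeRact A Y
     bimod := freeRact_freeLact A Y
     rho_coassoc := freeRho_coassoc A Y
     rho_counit := freeRho_counit A Y
     rho_mu := freeRho_congr A Y
     rho_cov := freeRho_cov A Y
     sigma_coassoc := freeSigma_coassoc A Y
     sigma_counit := freeSigma_counit A Y
     sigma_mu := freeSigma_congr A Y
     sigma_cov := freeSigma_cov A Y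
     homcomm := freeRho_freeSigma_comm A Y }, rfl, rfl, rfl, rfl, rfl⟩
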